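/- arXiv:1510.08524 — 3 statements merged into one kernel-verified Lean document; each statement's English description precedes it below -/
import Mathlib

section
/- Let c, α, m, d be positive reals with 1 - α/c < d/m < 1. Then the system f₁(x₁,x₂) = x₁(1 - x₁ - c x₂/(x₁ + α x₂)) = 0, f₂(x₁,x₂) = x₂(-d + m x₁/(x₁ + α x₂)) = 0 has a unique solution with x₁ > 0 and x₂ > 0, given by x₁* = 1 - (c/α)(1 - d/m) and x₂* = (1/α)(m/d - 1)x₁*. -/
theorem unique_positive_equilibrium_human_free
    (c α m d : ℝ) (hc : 0 < c) (hα : 0 < α) (hm : 0 < m) (hd : 0 < d)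
    (h1 : 1 - α / c < d / m) (h2 : d / m < 1) :
    ∀ x₁ x₂ : ℝ,
      (0 < x₁ ∧ 0 < x₂ ∧
        x₁ * (1 - x₁ - c * x₂ / (x₁ + α * x₂)) = 0 ∧
        x₂ * (-d + m * x₁ / (x₁ + α * x₂)) = 0)
      ↔ (x₁ = 1 - (c / α) * (1 - d / m) ∧
         x₂ = (1 / α) * (m / d - 1) * (1 - (c / α) * (1 - d / m))) := by
  have hdm : d < m := by
    have := (div_lt_one hm).mp h2; linarith
  have hx1star : 0 < 1 - (c / α) * (1 - d / m) := by
    have h1' : 1 - d / m < α / c := by linarith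
    have : c / α * (1 - d / m) < c / α * (α / c) := by
      apply mul_lt_mul_of_pos_left h1' (by positivity)
    have hca : c / α * (α / c) = 1 := by field_simp
    linarith [hca ▸ this]
  intro x₁ x₂
  constructor
  · rintro ⟨hx1, hx2, e1, e2⟩
    have hden : 0 < x₁ + α * x₂ := by positivity
    have h2' : -d + m * x₁ / (x₁ + α * x₂) = 0 := by
      rcases mul_eq_zero.mp e2 with h | h
      · exact absurd h hx2.ne'
      · exact h
    have h1'' : 1 - x₁ - c * x₂ / (x₁ + α * x₂) = 0 := by
      rcases mul_eq_zero.mp e1 with h | h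
      · exact absurd h hx1.ne'
      · exact h
    have hdmx : m * x₁ = d * (x₁ + α * x₂) := by
      field_simp at h2'
      linarith
    have hx2v : x₂ * (d * α) = (m - d) * x₁ := by ring_nf; ring_nf at hdmx; linarith
    have key : (1 - x₁) * (x₁ + α * x₂) = c * x₂ := by
      field_simp at h1''
      linarith
    have h3 : ((1 - x₁) * (α * m)) * x₁ = (c * (m - d)) * x₁ := by
      linear_combination d * α * key - ((1 - x₁) * α - c) * hx2v
    have h4 : (1 - x₁) * (α * m) = c * (m - d) := mul_right_cancel₀ hx1.ne' h3
    have hx1eq : x₁ = 1 - (c / α) * (1 - d / m) := by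
      field_simp
      linear_combination -h4
    refine ⟨hx1eq, ?_⟩
    rw [← hx1eq]
    field_simp
    linear_combination hx2v
  · rintro ⟨hx1, hx2⟩
    have hx2star : 0 < (1 / α) * (m / d - 1) * (1 - (c / α) * (1 - d / m)) := by
      have : 1 < m / d := (one_lt_div hd).mpr hdm
      have h0 : 0 < (1 / α) * (m / d - 1) :=
        mul_pos (by positivity) (by linarith)
      exact mul_pos h0 hx1star
    subst hx1 hx2
    have hden : 0 < (1 - (c / α) * (1 - d / m)) + α * ((1 / α) * (m / d - 1) * (1 - (c / α) * (1 - d / m))) := by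
      have : 0 < α * ((1 / α) * (m / d - 1) * (1 - (c / α) * (1 - d / m))) := mul_pos hα hx2star
      linarith
    refine ⟨hx1star, hx2star, ?_, ?_⟩
    · rw [mul_eq_zero]
      right
      rw [sub_eq_zero, eq_div_iff hden.ne']
      field_simp
      ring
    · rw [mul_eq_zero]
      right
      have : m * (1 - (c / α) * (1 - d / m)) / ((1 - (c / α) * (1 - d / m)) + α * ((1 / α) * (m / d - 1) * (1 - (c / α) * (1 - d / m)))) = d := by
        rw [div_eq_iff hden.ne']
        field_simp
        ring
      rw [this]
      ring
end

section
/- Let c, α, m, d, h₁, h₂ be positive reals with 1 - (α/c)(1 - h₁) < (d + h₂)/m < 1. Then the system x₁(1 - x₁ - c x₂/(x₁ + α x₂) - h₁) = 0, x₂(-d + m x₁/(x₁ + α x₂) - h₂) = 0 has a unique solution with x₁ > 0 and x₂ > 0, given by u₂* = 1 - h₁ - (c/α)(1 - (d + h₂)/m) and v₂* = (1/α)(m/(d + h₂) - 1)u₂*. -/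
theorem unique_positive_equilibrium_human_interference
    (c α m d h₁ h₂ : ℝ) (hc : 0 < c) (hα : 0 < α) (hm : 0 < m) (hd : 0 < d)
    (hh₁ : 0 < h₁) (hh₂ : 0 < h₂)
    (hlow : 1 - (α / c) * (1 - h₁) < (d + h₂) / m) (hhigh : (d + h₂) / m < 1) :
    ∀ x₁ x₂ : ℝ,
      (0 < x₁ ∧ 0 < x₂ ∧
        x₁ * (1 - x₁ - c * x₂ / (x₁ + α * x₂) - h₁) = 0 ∧
        x₂ * (-d + m * x₁ / (x₁ + α * x₂) - h₂) = 0)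
      ↔ (x₁ = 1 - h₁ - (c / α) * (1 - (d + h₂) / m) ∧
         x₂ = (1 / α) * (m / (d + h₂) - 1) * (1 - h₁ - (c / α) * (1 - (d + h₂) / m))) := by
  intro x₁ x₂
  have hdh : 0 < d + h₂ := by linarith
  have hαn : α ≠ 0 := ne_of_gt hα
  have hmn : m ≠ 0 := ne_of_gt hm
  have hcn : c ≠ 0 := ne_of_gt hc
  have hdhn : d + h₂ ≠ 0 := ne_of_gt hdh
  have hkk : (c / α) * (α / c) = 1 := by field_simp
  have hu : 0 < 1 - h₁ - (c / α) * (1 - (d + h₂) / m) := by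
    have h2 := mul_lt_mul_of_pos_left hlow (div_pos hc hα)
    nlinarith [h2, hkk]
  have hmdh : 0 < m - (d + h₂) := by
    have := (div_lt_one hm).mp hhigh
    linarith
  have hfac : 0 < m / (d + h₂) - 1 := by
    rw [lt_sub_iff_add_lt, zero_add, lt_div_iff₀ hdh]
    linarith
  constructor
  · rintro ⟨hx₁, hx₂, e1, e2⟩
    have hD : 0 < x₁ + α * x₂ := by positivity
    have hDn : x₁ + α * x₂ ≠ 0 := ne_of_gt hD
    have E1 : (1 - x₁ - h₁) * (x₁ + α * x₂) = c * x₂ := by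
      have h1 : 1 - x₁ - c * x₂ / (x₁ + α * x₂) - h₁ = 0 :=
        (mul_eq_zero.mp e1).resolve_left (ne_of_gt hx₁)
      field_simp at h1
      linarith [h1]
    have E2 : m * x₁ = (d + h₂) * (x₁ + α * x₂) := by
      have h2 : -d + m * x₁ / (x₁ + α * x₂) - h₂ = 0 :=
        (mul_eq_zero.mp e2).resolve_left (ne_of_gt hx₂)
      field_simp at h2
      linarith [h2]
    have A : α * (d + h₂) * x₂ = x₁ * (m - d - h₂) := by linear_combination -E2
    have T : x₁ * (α * m * (1 - x₁ - h₁) - c * (m - d - h₂)) = 0 := by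
      linear_combination (α * (d + h₂)) * E1 - ((1 - x₁ - h₁) * α - c) * A
    have T2 : α * m * (1 - x₁ - h₁) - c * (m - d - h₂) = 0 :=
      (mul_eq_zero.mp T).resolve_left (ne_of_gt hx₁)
    have hx₁v : x₁ = 1 - h₁ - (c / α) * (1 - (d + h₂) / m) := by
      field_simp
      linear_combination -T2
    refine ⟨hx₁v, ?_⟩
    have hx2e : x₂ = x₁ * (m - d - h₂) / (α * (d + h₂)) := by
      field_simp
      linear_combination A
    rw [hx2e, hx₁v]
    field_simp
    ring
  · rintro ⟨hx₁v, hx₂v⟩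
    subst hx₁v
    subst hx₂v
    set u := 1 - h₁ - (c / α) * (1 - (d + h₂) / m) with hudef
    set v := (1 / α) * (m / (d + h₂) - 1) * u with hvdef
    have hun : u ≠ 0 := ne_of_gt hu
    have hv : 0 < v := by
      rw [hvdef]
      exact mul_pos (mul_pos (by positivity) hfac) hu
    have hsum : u + α * v = u * m / (d + h₂) := by
      rw [hvdef]
      field_simp
      ring
    have Q : c * v / (u + α * v) = (c / α) * (1 - (d + h₂) / m) := by
      rw [hsum, hvdef]
      field_simp
    have R : m * u / (u + α * v) = d + h₂ := by
      rw [hsum]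
      field_simp
    refine ⟨hu, hv, ?_, ?_⟩
    · rw [Q, hudef]; ring
    · rw [R]; ring
end

section
/- Let c, α, m, d, d₁, d₂, λ₁ be positive reals with 1 - α/c < d/m < 1. Consider for each λ ≥ λ₁ the 2×2 matrix L(λ) with entries L₁₁ = -(m²α + cd² - cm² + d₁ λ α m²)/(m²α), L₁₂ = -c d²/m², L₂₁ = (m-d)²/(mα), L₂₂ = -(λ d₂ m + m d - d²)/m. If c ≤ α, then for every λ ≥ λ₁ > 0, trace L(λ) < 0 and det L(λ) > 0. -/
theorem routh_hurwitz_human_free_c_le_alpha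
    (c α m d d₁ d₂ lam1 : ℝ) (hc : 0 < c) (hα : 0 < α) (hm : 0 < m) (hd : 0 < d)
    (hd₁ : 0 < d₁) (hd₂ : 0 < d₂) (hlam1 : 0 < lam1)
    (h1 : 1 - α / c < d / m) (h2 : d / m < 1) (hcα : c ≤ α) :
    ∀ lam : ℝ, lam1 ≤ lam →
      Matrix.trace (!![-(m^2*α + c*d^2 - c*m^2 + d₁*lam*α*m^2)/(m^2*α), -(c*d^2/m^2);
                       (m-d)^2/(m*α), -(lam*d₂*m + m*d - d^2)/m] : Matrix (Fin 2) (Fin 2) ℝ) < 0 ∧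
      0 < Matrix.det (!![-(m^2*α + c*d^2 - c*m^2 + d₁*lam*α*m^2)/(m^2*α), -(c*d^2/m^2);
                       (m-d)^2/(m*α), -(lam*d₂*m + m*d - d^2)/m] : Matrix (Fin 2) (Fin 2) ℝ) := by
  intro lam hlam
  have hdm : d < m := by
    have := (div_lt_one hm).mp h2
    linarith
  have hlampos : 0 < lam := lt_of_lt_of_le hlam1 hlam
  have hA : 0 < m^2*α + c*d^2 - c*m^2 + d₁*lam*α*m^2 := by
    nlinarith [mul_le_mul_of_nonneg_right hcα (by nlinarith : (0:ℝ) ≤ m^2 - d^2),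
      mul_pos hα (mul_pos hd hd), mul_pos (mul_pos hd₁ hlampos) (mul_pos hα (mul_pos hm hm))]
  have hB : 0 < lam*d₂*m + m*d - d^2 := by nlinarith [mul_pos (mul_pos hlampos hd₂) hm]
  have hY : (0:ℝ) < m^2*α := by positivity
  constructor
  · simp only [Matrix.trace_fin_two_of]
    have t1 : -(m^2*α + c*d^2 - c*m^2 + d₁*lam*α*m^2)/(m^2*α) < 0 := by
      rw [neg_div]; exact neg_lt_zero.mpr (div_pos hA hY)
    have t2 : -(lam*d₂*m + m*d - d^2)/m < 0 := by
      rw [neg_div]; exact neg_lt_zero.mpr (div_pos hB hm)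
    linarith
  · rw [Matrix.det_fin_two_of]
    have ha : 0 < -(m^2*α + c*d^2 - c*m^2 + d₁*lam*α*m^2)/(m^2*α) * (-(lam*d₂*m + m*d - d^2)/m) := by
      have : -(m^2*α + c*d^2 - c*m^2 + d₁*lam*α*m^2)/(m^2*α) * (-(lam*d₂*m + m*d - d^2)/m)
          = ((m^2*α + c*d^2 - c*m^2 + d₁*lam*α*m^2)/(m^2*α)) * ((lam*d₂*m + m*d - d^2)/m) := by
        ring
      rw [this]
      exact mul_pos (div_pos hA hY) (div_pos hB hm)
    have hb : -(c*d^2/m^2) * ((m-d)^2/(m*α)) < 0 := by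
      apply mul_neg_of_neg_of_pos
      · rw [neg_lt_zero]; positivity
      · have : (0:ℝ) < (m-d)^2 := pow_pos (sub_pos.mpr hdm) 2
        exact div_pos this (by positivity)
      -- note: (m-d)^2 > 0 needs m ≠ d
    linarith
end
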